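/- arXiv:1603.01677 — 4 statements merged into one kernel-verified Lean document; each statement's English description precedes it below -/
import Mathlib

section
/- Let η̲ > 0, C > 0, and suppose r : [v₁, v*) → ℝ is continuously differentiable with r > 0, r(v) → 0 as v → v*, and satisfies dr/dv ≥ C̃ + (1/2)χ̃(v) where 0 < C̃ < η̲ and χ̃(v) = χ(v₁)·exp(-∫_{v₁}^v (η/r)(v')dv') with η ≥ η̲ continuous and χ(v₁) < 0. If moreover φ̃ := -χ̃ satisfies φ̃(v) ≥ 2C̃ for all v ∈ [v₁, v*), then r(v) ≤ ((1/2)φ̃(v₁) - C̃)(v* - v) for all v ∈ [v₁, v*), and φ̃(v) ≤ φ̃(v₁)·((v*-v)/(v*-v₁))^{η̲/((1/2)φ̃(v₁)-C̃)}, so φ̃(v) → 0 as v → v*, a contradiction; hence no such r exists. -/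
/-!
A lower bound `r' ≥ -K` together with `r → 0` at `v*` gives `r(v) ≤ K (v* - v)`, where
`K = φ̃(v₁)/2 - C̃` (because `χ̃` only increases from `χ̃(v₁) = χ₁`). Then `η / r ≥ η̲ / (K (v* - v))`,
whose integral is logarithmic, so `φ̃ = -χ₁ exp(-∫ η / r)` is bounded by a positive power of
`v* - v`. Hence `φ̃ → 0` at `v*`, which is incompatible with `φ̃ ≥ 2 C̃ > 0`.
-/

open Set Filter Topology

theorem le_mul_sub_of_neg_le_deriv_of_tendsto_zero {r : ℝ → ℝ} {a b K : ℝ}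
    (hr : ∀ x ∈ Ico a b, DifferentiableAt ℝ r x)
    (hlim : Tendsto r (𝓝[<] b) (𝓝 0))
    (hderiv : ∀ x ∈ Ico a b, -K ≤ deriv r x) :
    ∀ v ∈ Ico a b, r v ≤ K * (b - v) := by
  intro v hv
  have hincr : ∀ w ∈ Ico a b, v ≤ w → -K * (w - v) ≤ r w - r v :=
    (convex_Ico a b).mul_sub_le_image_sub_of_le_deriv
      (fun x hx => (hr x hx).continuousAt.continuousWithinAt)
      (fun x hx => (hr x (interior_subset hx)).differentiableWithinAt)
      (fun x hx => hderiv x (interior_subset hx)) v hv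
  have hlim' : Tendsto (fun w => r w + K * (w - v)) (𝓝[<] b) (𝓝 (0 + K * (b - v))) :=
    hlim.add (((continuous_const.mul (continuous_id.sub continuous_const)).tendsto b).mono_left
      nhdsWithin_le_nhds)
  have : r v ≤ 0 + K * (b - v) := by
    refine ge_of_tendsto hlim' ?_
    filter_upwards [Ico_mem_nhdsLT_of_mem ⟨hv.2, le_rfl⟩] with w hw
    linarith [hincr w ⟨hv.1.trans hw.1, hw.2⟩ hw.1]
  linarith

theorem integral_inv_sub_left {a v b : ℝ} (ha : a < b) (hv : v < b) :
    ∫ x in a..v, (b - x)⁻¹ = Real.log ((b - a) / (b - v)) := by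
  rw [intervalIntegral.integral_comp_sub_left (fun x => x⁻¹) b,
    integral_inv (Set.notMem_uIcc_of_lt (sub_pos.2 hv) (sub_pos.2 ha))]

section IntegralBound

variable {η r : ℝ → ℝ} {a b c K v : ℝ}

theorem mul_log_le_integral_div (hc : 0 ≤ c) (hv : v ∈ Ico a b)
    (hη : ContinuousOn η (Ico a b)) (hr : ContinuousOn r (Ico a b))
    (hrpos : ∀ x ∈ Ico a b, 0 < r x) (hηlb : ∀ x ∈ Ico a b, c ≤ η x)
    (hrub : ∀ x ∈ Ico a b, r x ≤ K * (b - x)) :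
    c / K * Real.log ((b - a) / (b - v)) ≤ ∫ x in a..v, η x / r x := by
  have hsub : Icc a v ⊆ Ico a b := Icc_subset_Ico_right hv.2
  rw [← integral_inv_sub_left (hv.1.trans_lt hv.2) hv.2, ← intervalIntegral.integral_const_mul]
  refine intervalIntegral.integral_mono_on hv.1 ?_ ?_ fun x hx => ?_
  · refine ContinuousOn.intervalIntegrable ?_
    rw [uIcc_of_le hv.1]
    exact continuousOn_const.mul ((continuousOn_const.sub continuousOn_id).inv₀
      fun x hx => (sub_pos.2 (hsub hx).2).ne')
  · refine ContinuousOn.intervalIntegrable ?_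
    rw [uIcc_of_le hv.1]
    exact (hη.div hr fun x hx => (hrpos x hx).ne').mono hsub
  · rw [← div_eq_mul_inv, div_div]
    exact div_le_div₀ (hc.trans (hηlb x (hsub hx))) (hηlb x (hsub hx)) (hrpos x (hsub hx))
      (hrub x (hsub hx))

theorem exp_neg_integral_div_le_rpow (hc : 0 ≤ c) (hv : v ∈ Ico a b)
    (hη : ContinuousOn η (Ico a b)) (hr : ContinuousOn r (Ico a b))
    (hrpos : ∀ x ∈ Ico a b, 0 < r x) (hηlb : ∀ x ∈ Ico a b, c ≤ η x)
    (hrub : ∀ x ∈ Ico a b, r x ≤ K * (b - x)) :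
    Real.exp (-∫ x in a..v, η x / r x) ≤ ((b - v) / (b - a)) ^ (c / K) := by
  have hlog := mul_log_le_integral_div hc hv hη hr hrpos hηlb hrub
  rw [Real.rpow_def_of_pos (div_pos (sub_pos.2 hv.2) (sub_pos.2 (hv.1.trans_lt hv.2))),
    ← inv_div, Real.log_inv]
  exact Real.exp_le_exp.2 (by linarith)

end IntegralBound

theorem tendsto_rpow_sub_div_nhdsLT_zero (a b : ℝ) {p : ℝ} (hp : 0 < p) :
    Tendsto (fun v => ((b - v) / (b - a)) ^ p) (𝓝[<] b) (𝓝 0) := by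
  have hcont : Continuous fun v : ℝ => ((b - v) / (b - a)) ^ p :=
    ((continuous_const.sub continuous_id).div_const _).rpow_const fun _ => Or.inr hp.le
  simpa [Real.zero_rpow hp.ne'] using (hcont.tendsto b).mono_left nhdsWithin_le_nhds

theorem stmt4_general (v₁ vStar : ℝ) (hv : v₁ < vStar)
    (etaL Ct : ℝ) (hCt : 0 < Ct) (hCeta : Ct < etaL)
    (η r : ℝ → ℝ) (hηc : ContinuousOn η (Set.Ico v₁ vStar))
    (hηlb : ∀ v ∈ Set.Ico v₁ vStar, etaL ≤ η v)
    (χ₁ : ℝ) (hχ₁ : χ₁ < 0)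
    (chiT : ℝ → ℝ)
    (hchiT : ∀ v : ℝ, chiT v = χ₁ * Real.exp (-∫ v' in v₁..v, η v' / r v'))
    (hrdiff : ∀ v ∈ Set.Ico v₁ vStar, DifferentiableAt ℝ r v)
    (hrpos : ∀ v ∈ Set.Ico v₁ vStar, 0 < r v)
    (hrlim : Filter.Tendsto r (nhdsWithin vStar (Set.Iio vStar)) (nhds 0))
    (hrineq : ∀ v ∈ Set.Ico v₁ vStar, Ct + chiT v / 2 ≤ deriv r v)
    (hφ : ∀ v ∈ Set.Ico v₁ vStar, 2 * Ct ≤ -chiT v) :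
    (∀ v ∈ Set.Ico v₁ vStar, r v ≤ ((-chiT v₁) / 2 - Ct) * (vStar - v)) ∧
    (∀ v ∈ Set.Ico v₁ vStar,
      -chiT v ≤ (-chiT v₁) *
        ((vStar - v) / (vStar - v₁)) ^ (etaL / ((-chiT v₁) / 2 - Ct))) ∧
    False := by
  have hetaL : 0 < etaL := hCt.trans hCeta
  have hrc : ContinuousOn r (Ico v₁ vStar) := fun x hx =>
    (hrdiff x hx).continuousAt.continuousWithinAt
  have hχv₁ : chiT v₁ = χ₁ := by simp [hchiT]
  have hχ_ge : ∀ v ∈ Ico v₁ vStar, χ₁ ≤ chiT v := fun v hv => by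
    have hsub : Icc v₁ v ⊆ Ico v₁ vStar := Icc_subset_Ico_right hv.2
    have : 0 ≤ ∫ x in v₁..v, η x / r x := intervalIntegral.integral_nonneg hv.1 fun x hx =>
      div_nonneg (hetaL.le.trans (hηlb x (hsub hx))) (hrpos x (hsub hx)).le
    rw [hchiT]
    nlinarith [Real.exp_le_one_iff.2 (neg_nonpos.2 this)]
  have hr_le : ∀ v ∈ Ico v₁ vStar, r v ≤ ((-chiT v₁) / 2 - Ct) * (vStar - v) :=
    le_mul_sub_of_neg_le_deriv_of_tendsto_zero hrdiff hrlim fun v hv => by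
      linarith [hrineq v hv, hχ_ge v hv, hχv₁]
  have hK : 0 < (-chiT v₁) / 2 - Ct :=
    pos_of_mul_pos_left ((hrpos v₁ ⟨le_rfl, hv⟩).trans_le (hr_le v₁ ⟨le_rfl, hv⟩))
      (sub_pos.2 hv).le
  have hφ_le : ∀ v ∈ Ico v₁ vStar, -chiT v ≤ (-chiT v₁) *
      ((vStar - v) / (vStar - v₁)) ^ (etaL / ((-chiT v₁) / 2 - Ct)) := fun v hv => by
    rw [hchiT v, hχv₁, ← neg_mul]
    exact mul_le_mul_of_nonneg_left (exp_neg_integral_div_le_rpow hetaL.le hv hηc hrc hrpos hηlb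
      (hχv₁ ▸ hr_le)) (neg_nonneg.2 hχ₁.le)
  refine ⟨hr_le, hφ_le, ?_⟩
  have hsmall := ((tendsto_rpow_sub_div_nhdsLT_zero v₁ vStar (div_pos hetaL hK)).const_mul
    (-chiT v₁)).eventually (gt_mem_nhds (a := 2 * Ct) (by simpa using hCt))
  obtain ⟨v, hlt, hv⟩ := (hsmall.and (Ico_mem_nhdsLT hv)).exists
  linarith [hφ v hv, hφ_le v hv]

/-- blowup exclusion along C⁺. If r > 0 is C¹ on [v₁, v*), r → 0 at v*,
r' ≥ C̃ + χ̃/2 with χ̃(v) = χ₁·exp(-∫_{v₁}^v η/r), 0 < C̃ < η̲ ≤ η, χ₁ < 0, and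
φ̃ = -χ̃ ≥ 2C̃ throughout, then r(v) ≤ (φ̃(v₁)/2 - C̃)(v*-v),
φ̃(v) ≤ φ̃(v₁)((v*-v)/(v*-v₁))^{η̲/(φ̃(v₁)/2 - C̃)} (so φ̃ → 0), a contradiction:
no such r exists. -/
theorem stmt4 (v₁ vStar : ℝ) (hv : v₁ < vStar)
    (etaL Ct : ℝ) (hCt : 0 < Ct) (hCeta : Ct < etaL)
    (η r : ℝ → ℝ) (hηc : ContinuousOn η (Set.Ico v₁ vStar))
    (hηlb : ∀ v ∈ Set.Ico v₁ vStar, etaL ≤ η v)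
    (χ₁ : ℝ) (hχ₁ : χ₁ < 0)
    (chiT : ℝ → ℝ)
    (hchiT : ∀ v : ℝ, chiT v = χ₁ * Real.exp (-∫ v' in v₁..v, η v' / r v'))
    (hrdiff : ∀ v ∈ Set.Ico v₁ vStar, DifferentiableAt ℝ r v)
    (hrderc : ContinuousOn (deriv r) (Set.Ico v₁ vStar))
    (hrpos : ∀ v ∈ Set.Ico v₁ vStar, 0 < r v)
    (hrlim : Filter.Tendsto r (nhdsWithin vStar (Set.Iio vStar)) (nhds 0))
    (hrineq : ∀ v ∈ Set.Ico v₁ vStar, Ct + chiT v / 2 ≤ deriv r v)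
    (hφ : ∀ v ∈ Set.Ico v₁ vStar, 2 * Ct ≤ -chiT v) :
    (∀ v ∈ Set.Ico v₁ vStar, r v ≤ ((-chiT v₁) / 2 - Ct) * (vStar - v)) ∧
    (∀ v ∈ Set.Ico v₁ vStar,
      -chiT v ≤ (-chiT v₁) *
        ((vStar - v) / (vStar - v₁)) ^ (etaL / ((-chiT v₁) / 2 - Ct))) ∧
    False :=
  stmt4_general v₁ vStar hv etaL Ct hCt hCeta η r hηc hηlb χ₁ hχ₁ chiT hchiT hrdiff hrpos hrlim
    hrineq hφ
end

section
/- Let α ∈ C¹([0, u*)) be given, ε > 0, and suppose (β, r) solves dβ/du = -(η/r)(α-β), dr/du = (1/2)(α-β) - η on [0, u*) with r(u) > ε for all u, where η = η(α+β) is smooth, positive, and increasing. Then χ = α - β and β remain bounded on [0, u*) (if u* < ∞); i.e. the only way the solution of the incoming constraint system fails to extend is that r reaches ε or u* = ∞. -/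
open Set

private lemma stmt8_exit {u c : ℝ} (hu : 0 ≤ u) {g : ℝ → ℝ}
    (hg : ContinuousOn g (Icc 0 u)) :
    ∃ u₀, u₀ ∈ Icc 0 u ∧ (g u₀ ≤ c ∨ u₀ = 0) ∧ ∀ s ∈ Ioc u₀ u, c < g s := by
  set T : Set ℝ := (Icc 0 u ∩ g ⁻¹' Iic c) ∪ {0} with hT
  have hne : T.Nonempty := ⟨0, Or.inr rfl⟩
  have hbdd : BddAbove T := by
    refine ⟨u, ?_⟩
    rintro s (⟨hs, -⟩ | rfl)
    · exact hs.2
    · exact hu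
  have hcl : IsClosed T :=
    (hg.preimage_isClosed_of_isClosed isClosed_Icc isClosed_Iic).union isClosed_singleton
  have hmem : sSup T ∈ T := hcl.csSup_mem hne hbdd
  have h0T : (0:ℝ) ∈ T := Or.inr rfl
  have h0le : (0:ℝ) ≤ sSup T := le_csSup hbdd h0T
  refine ⟨sSup T, ?_, ?_, ?_⟩
  · rcases hmem with h | h
    · exact h.1
    · simp only [mem_singleton_iff] at h; rw [h]; exact ⟨le_refl _, hu⟩
  · rcases hmem with h | h
    · exact Or.inl h.2
    · exact Or.inr h
  · intro s hs
    by_contra hc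
    push_neg at hc
    have hsT : s ∈ T := Or.inl ⟨⟨h0le.trans hs.1.le, hs.2⟩, hc⟩
    exact absurd (le_csSup hbdd hsT) (not_le.mpr hs.1)

private lemma stmt8_anti {a b : ℝ} {f f' : ℝ → ℝ}
    (hc : ContinuousOn f (Icc a b))
    (hd : ∀ x ∈ Ioo a b, HasDerivAt f (f' x) x)
    (hle : ∀ x ∈ Ioo a b, f' x ≤ 0) : AntitoneOn f (Icc a b) := by
  apply antitoneOn_of_deriv_nonpos (convex_Icc a b) hc
  · intro x hx
    rw [interior_Icc] at hx
    exact (hd x hx).differentiableAt.differentiableWithinAt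
  · intro x hx
    rw [interior_Icc] at hx
    rw [(hd x hx).deriv]
    exact hle x hx

/-- along C⁻, if (β, r) solves dβ/du = -(η/r)(α-β),
dr/du = (α-β)/2 - η on [0, u*) with r > ε > 0 throughout, α given C¹ and
η = η(α+β) smooth positive increasing, then χ = α - β and β remain bounded on
[0, u*): the solution can only fail to extend because r reaches ε or u* = ∞. -/
theorem stmt8 (uStar ε : ℝ) (hu : 0 < uStar) (hε : 0 < ε)
    (η : ℝ → ℝ) (hηs : ContDiff ℝ (⊤ : ℕ∞) η) (hηpos : ∀ x : ℝ, 0 < η x)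
    (hηmono : StrictMono η)
    (α : ℝ → ℝ) (hα : ContDiff ℝ 1 α)
    (β r : ℝ → ℝ)
    (hβ : ∀ u ∈ Set.Ico (0:ℝ) uStar,
      HasDerivAt β (-(η (α u + β u) / r u) * (α u - β u)) u)
    (hrode : ∀ u ∈ Set.Ico (0:ℝ) uStar,
      HasDerivAt r ((α u - β u) / 2 - η (α u + β u)) u)
    (hrε : ∀ u ∈ Set.Ico (0:ℝ) uStar, ε < r u) :
    ∃ C : ℝ, ∀ u ∈ Set.Ico (0:ℝ) uStar, |α u - β u| ≤ C ∧ |β u| ≤ C := by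
  obtain ⟨A₀, hA₀⟩ := (isCompact_Icc (a := (0:ℝ)) (b := uStar)).exists_bound_of_continuousOn
    (hα.continuous.continuousOn)
  set A := max A₀ 0 with hAdef
  have hA0 : (0:ℝ) ≤ A := le_max_right _ _
  have hA : ∀ s ∈ Icc (0:ℝ) uStar, |α s| ≤ A := by
    intro s hs
    have h := hA₀ s hs
    rw [Real.norm_eq_abs] at h
    exact h.trans (le_max_left _ _)
  clear_value A
  have hsub : ∀ {s : ℝ}, s ∈ Ico (0:ℝ) uStar → s ∈ Icc (0:ℝ) uStar :=
    fun hs => ⟨hs.1, hs.2.le⟩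
  have hβct : ∀ s ∈ Ico (0:ℝ) uStar, ContinuousAt β s := fun s hs => (hβ s hs).continuousAt
  have hrct : ∀ s ∈ Ico (0:ℝ) uStar, ContinuousAt r s := fun s hs => (hrode s hs).continuousAt
  have h0mem : (0:ℝ) ∈ Ico (0:ℝ) uStar := ⟨le_refl _, hu⟩
  set K := η (-1) / ε with hKdef
  have hK : 0 < K := div_pos (hηpos _) hε
  clear_value K
  set M := max (2*A+1) (A - β 0) with hMdef
  have hM0 : 0 < M := lt_of_lt_of_le (by linarith) (le_max_left _ _)
  clear_value M
  set Blo := Real.exp (K * uStar) * M with hBlodef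
  have hBlo0 : 0 < Blo := mul_pos (Real.exp_pos _) hM0
  clear_value Blo
  -- Step 1 : lower bound for β
  have hlow : ∀ u ∈ Ico (0:ℝ) uStar, A - β u ≤ Blo := by
    intro u huu
    have hsubIcc : Icc (0:ℝ) u ⊆ Ico (0:ℝ) uStar :=
      fun s hs => ⟨hs.1, lt_of_le_of_lt hs.2 huu.2⟩
    have hβcont : ContinuousOn β (Icc 0 u) :=
      fun s hs => (hβct s (hsubIcc hs)).continuousWithinAt
    obtain ⟨u₀, hu₀, hcase, hreg⟩ := stmt8_exit (c := A + 1) huu.1 hβcont.neg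
    set V : ℝ → ℝ := fun s => Real.exp (-(K*s)) * (A - β s) with hV
    have hanti : AntitoneOn V (Icc u₀ u) := by
      apply stmt8_anti (f' := fun x => Real.exp (-(K*x)) *
        (η (α x + β x) / r x * (α x - β x) - K * (A - β x)))
      · intro s hs
        have hsm : s ∈ Ico (0:ℝ) uStar := hsubIcc ⟨hu₀.1.trans hs.1, hs.2⟩
        exact ((Real.continuous_exp.comp (continuous_const.mul continuous_id).neg).continuousAt.continuousWithinAt.mul
          ((continuousAt_const.sub (hβct s hsm)).continuousWithinAt))
      · intro x hx
        have hxm : x ∈ Ico (0:ℝ) uStar := ⟨hu₀.1.trans hx.1.le, hx.2.trans huu.2⟩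
        have h1 : HasDerivAt (fun s : ℝ => -(K*s)) (-K) x := by
          simpa using (hasDerivAt_id x).const_mul (-K)
        have h2 := h1.exp
        have h3 := (hβ x hxm).const_sub A
        have h4 := h2.mul h3
        exact h4.congr_deriv (by ring)
      · intro x hx
        have hxm : x ∈ Ico (0:ℝ) uStar := ⟨hu₀.1.trans hx.1.le, hx.2.trans huu.2⟩
        have hrg : β x < -(A+1) := by
          have := hreg x ⟨hx.1, hx.2.le⟩; simp only [Pi.neg_apply] at this; linarith
        have habs := abs_le.mp (hA x (hsub hxm))
        have he := hηpos (α x + β x)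
        have hrx := hrε x hxm
        have hR0 : 0 < r x := hε.trans hrx
        have hη1 : η (α x + β x) ≤ η (-1) :=
          hηmono.monotone (by linarith)
        have hq : η (α x + β x) / r x ≤ K := by
          rw [hKdef]
          calc η (α x + β x) / r x ≤ η (-1) / r x :=
                div_le_div_of_nonneg_right hη1 hR0.le
            _ ≤ η (-1) / ε := div_le_div_of_nonneg_left (hηpos _).le hε hrx.le
        have hχ1 : (0:ℝ) < α x - β x := by linarith
        have hχ2 : α x - β x ≤ A - β x := by linarith
        have key : η (α x + β x) / r x * (α x - β x) ≤ K * (A - β x) := by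
          calc η (α x + β x) / r x * (α x - β x) ≤ K * (α x - β x) :=
                mul_le_mul_of_nonneg_right hq hχ1.le
            _ ≤ K * (A - β x) := mul_le_mul_of_nonneg_left hχ2 hK.le
        exact mul_nonpos_of_nonneg_of_nonpos (Real.exp_pos _).le (by linarith)
    have hVle : V u ≤ V u₀ := hanti ⟨le_rfl, hu₀.2⟩ ⟨hu₀.2, le_rfl⟩ hu₀.2
    have hMu₀ : A - β u₀ ≤ M := by
      rcases hcase with h | h
      · rw [hMdef]
        exact le_trans (by simp only [Pi.neg_apply] at h; linarith : A - β u₀ ≤ 2*A+1) (le_max_left _ _)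
      · rw [h, hMdef]; exact le_max_right _ _
    have hVu : V u = Real.exp (-(K*u)) * (A - β u) := rfl
    have hVu₀ : V u₀ = Real.exp (-(K*u₀)) * (A - β u₀) := rfl
    rw [hVu, hVu₀] at hVle
    by_cases hsgn : 0 ≤ A - β u₀
    · have step1 : A - β u = Real.exp (K*u) * (Real.exp (-(K*u)) * (A - β u)) := by
        rw [← mul_assoc, ← Real.exp_add]; simp
      have step3 : Real.exp (K*u) * (Real.exp (-(K*u₀)) * (A - β u₀))
          = Real.exp (K*u - K*u₀) * (A - β u₀) := by
        rw [← mul_assoc, ← Real.exp_add]; ring_nf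
      have hdt : K*u - K*u₀ ≤ K * uStar := by
        have h1 : u - u₀ ≤ uStar := by
          have := hu₀.1; have := huu.2; linarith
        nlinarith
      calc A - β u = Real.exp (K*u) * (Real.exp (-(K*u)) * (A - β u)) := step1
        _ ≤ Real.exp (K*u) * (Real.exp (-(K*u₀)) * (A - β u₀)) :=
            mul_le_mul_of_nonneg_left hVle (Real.exp_pos _).le
        _ = Real.exp (K*u - K*u₀) * (A - β u₀) := step3
        _ ≤ Real.exp (K*uStar) * M :=
            mul_le_mul (Real.exp_le_exp.mpr hdt) hMu₀ hsgn (Real.exp_pos _).le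
        _ = Blo := hBlodef.symm
    · push_neg at hsgn
      have hlt0 : Real.exp (-(K*u)) * (A - β u) < 0 :=
        lt_of_le_of_lt hVle (mul_neg_of_pos_of_neg (Real.exp_pos _) hsgn)
      have : A - β u < 0 := by nlinarith [Real.exp_pos (-(K*u))]
      linarith
  -- Step 2 : upper bound for r
  set rmax := r 0 + Blo/2 * uStar with hrmaxdef
  clear_value rmax
  have hrmax : ∀ u ∈ Ico (0:ℝ) uStar, r u ≤ rmax := by
    intro u huu
    have hsubIcc : Icc (0:ℝ) u ⊆ Ico (0:ℝ) uStar :=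
      fun s hs => ⟨hs.1, lt_of_le_of_lt hs.2 huu.2⟩
    set W : ℝ → ℝ := fun s => r s - Blo/2 * s with hW
    have hanti : AntitoneOn W (Icc 0 u) := by
      apply stmt8_anti (f' := fun x => ((α x - β x)/2 - η (α x + β x)) - Blo/2)
      · intro s hs
        exact ((hrct s (hsubIcc hs)).continuousWithinAt.sub
          (continuous_const.mul continuous_id).continuousAt.continuousWithinAt)
      · intro x hx
        have hxm : x ∈ Ico (0:ℝ) uStar := hsubIcc ⟨hx.1.le, hx.2.le⟩
        have h1 : HasDerivAt (fun s : ℝ => Blo/2 * s) (Blo/2) x := by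
          simpa using (hasDerivAt_id x).const_mul (Blo/2)
        exact (hrode x hxm).sub h1
      · intro x hx
        have hxm : x ∈ Ico (0:ℝ) uStar := hsubIcc ⟨hx.1.le, hx.2.le⟩
        have habs := abs_le.mp (hA x (hsub hxm))
        have hl := hlow x hxm
        have he := hηpos (α x + β x)
        linarith
    have hWle : W u ≤ W 0 := hanti ⟨le_rfl, huu.1⟩ ⟨huu.1, le_rfl⟩ huu.1
    have h1 : Blo/2 * u ≤ Blo/2 * uStar :=
      mul_le_mul_of_nonneg_left huu.2.le (by positivity)
    have h2 : W u = r u - Blo/2 * u := rfl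
    have h3 : W 0 = r 0 := by simp [hW]
    rw [h2, h3] at hWle
    rw [hrmaxdef]
    linarith
  have hr0 : ε < r 0 := hrε 0 h0mem
  have hrmax0 : 0 < rmax := by
    rw [hrmaxdef]
    have h1 : 0 ≤ Blo/2 * uStar := by positivity
    linarith
  -- Step 3 : upper bound for β
  set P := max (2*A+1) (β 0 + A) with hPdef
  have hP0 : (0:ℝ) < P := lt_of_lt_of_le (by linarith) (le_max_left _ _)
  clear_value P
  set Bup := P * Real.exp (rmax / ε) with hBupdef
  clear_value Bup
  have hexp1 : (1:ℝ) ≤ Real.exp (rmax/ε) := Real.one_le_exp (div_pos hrmax0 hε).le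
  have hPBup : P ≤ Bup := by
    rw [hBupdef]; exact le_mul_of_one_le_right hP0.le hexp1
  have hupb : ∀ u ∈ Ico (0:ℝ) uStar, β u ≤ Bup := by
    intro u huu
    by_cases htriv : β u ≤ A + 1
    · have h1 : β u ≤ 2*A+1 := by linarith
      have h2 : (2*A+1 : ℝ) ≤ P := by rw [hPdef]; exact le_max_left _ _
      linarith
    push_neg at htriv
    have hsubIcc : Icc (0:ℝ) u ⊆ Ico (0:ℝ) uStar :=
      fun s hs => ⟨hs.1, lt_of_le_of_lt hs.2 huu.2⟩
    have hβcont : ContinuousOn β (Icc 0 u) :=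
      fun s hs => (hβct s (hsubIcc hs)).continuousWithinAt
    obtain ⟨u₀, hu₀, hcase, hreg⟩ := stmt8_exit (c := A + 1) huu.1 hβcont
    rcases eq_or_lt_of_le hu₀.2 with heq | hlt
    · rcases hcase with h | h
      · rw [heq] at h; linarith
      · have hequ : β u = β 0 := by rw [← heq, h]
        have h2 : β 0 + A ≤ P := by rw [hPdef]; exact le_max_right _ _
        linarith
    have hu₀ge : A + 1 ≤ β u₀ := by
      have hct : ContinuousWithinAt β (Ioi u₀) u₀ :=
        (hβct u₀ (hsubIcc ⟨hu₀.1, hu₀.2⟩)).continuousWithinAt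
      refine ge_of_tendsto hct ?_
      filter_upwards [Ioo_mem_nhdsGT_of_mem (⟨le_rfl, hlt⟩ : u₀ ∈ Ico u₀ u)] with s hs
      exact (hreg s ⟨hs.1, hs.2.le⟩).le
    have hIccge : ∀ s ∈ Icc u₀ u, A + 1 ≤ β s := by
      intro s hs
      rcases eq_or_lt_of_le hs.1 with h | h
      · rw [← h]; exact hu₀ge
      · exact (hreg s ⟨h, hs.2⟩).le
    have hpos : ∀ s ∈ Icc u₀ u, 0 < β s + A := by
      intro s hs; have := hIccge s hs; linarith
    set V : ℝ → ℝ := fun s => Real.log (β s + A) + r s / ε with hV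
    have hanti : AntitoneOn V (Icc u₀ u) := by
      apply stmt8_anti (f' := fun x =>
        (-(η (α x + β x) / r x) * (α x - β x)) / (β x + A)
          + ((α x - β x)/2 - η (α x + β x))/ε)
      · intro s hs
        have hsm : s ∈ Ico (0:ℝ) uStar := hsubIcc ⟨hu₀.1.trans hs.1, hs.2⟩
        have h1 : ContinuousAt (fun s => β s + A) s := (hβct s hsm).add continuousAt_const
        have h2 : ContinuousAt (fun s => Real.log (β s + A)) s :=
          h1.log (ne_of_gt (hpos s hs))
        exact (h2.add ((hrct s hsm).div_const ε)).continuousWithinAt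
      · intro x hx
        have hxm : x ∈ Ico (0:ℝ) uStar := ⟨hu₀.1.trans hx.1.le, hx.2.trans huu.2⟩
        have h1 := (hβ x hxm).add_const A
        have h2 := h1.log (ne_of_gt (hpos x ⟨hx.1.le, hx.2.le⟩))
        exact h2.add ((hrode x hxm).div_const ε)
      · intro x hx
        have hxm : x ∈ Ico (0:ℝ) uStar := ⟨hu₀.1.trans hx.1.le, hx.2.trans huu.2⟩
        have hrg : A + 1 < β x := hreg x ⟨hx.1, hx.2.le⟩
        have habs := abs_le.mp (hA x (hsub hxm))
        have he := hηpos (α x + β x)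
        have hrx := hrε x hxm
        have hR0 : 0 < r x := hε.trans hrx
        have hp : 0 < β x + A := by linarith
        have hba : 0 < β x - α x := by linarith
        have t1 : -(η (α x + β x) / r x) * (α x - β x)
            = η (α x + β x) / r x * (β x - α x) := by ring
        have t2 : η (α x + β x) / r x ≤ η (α x + β x) / ε :=
          div_le_div_of_nonneg_left he.le hε hrx.le
        have t3 : η (α x + β x) / r x * (β x - α x)
            ≤ η (α x + β x) / ε * (β x + A) :=
          mul_le_mul t2 (by linarith) hba.le (by positivity)
        have t4 : -(η (α x + β x) / r x) * (α x - β x) / (β x + A)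
            ≤ η (α x + β x) / ε := by
          rw [t1, div_le_iff₀ hp]
          exact t3
        have t5 : ((α x - β x)/2 - η (α x + β x))/ε ≤ -(η (α x + β x)/ε) := by
          have h6 : ((α x - β x)/2 - η (α x + β x))/ε ≤ (-(η (α x + β x)))/ε :=
            div_le_div_of_nonneg_right (by linarith) hε.le
          rwa [neg_div] at h6
        linarith
    have hVle : V u ≤ V u₀ := hanti ⟨le_rfl, hu₀.2⟩ ⟨hu₀.2, le_rfl⟩ hu₀.2
    have hru : ε < r u := hrε u huu
    have hru₀ : r u₀ ≤ rmax := hrmax u₀ (hsubIcc ⟨hu₀.1, hu₀.2⟩)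
    have hVu : V u = Real.log (β u + A) + r u / ε := rfl
    have hVu₀ : V u₀ = Real.log (β u₀ + A) + r u₀ / ε := rfl
    rw [hVu, hVu₀] at hVle
    have hlog : Real.log (β u + A) ≤ Real.log (β u₀ + A) + rmax/ε := by
      have h8 : (r u₀ - r u)/ε ≤ rmax / ε :=
        div_le_div_of_nonneg_right (by linarith) hε.le
      rw [sub_div] at h8
      linarith
    have hpu : 0 < β u + A := by linarith
    have hpu₀ : 0 < β u₀ + A := hpos u₀ ⟨le_rfl, hu₀.2⟩
    have hexp := Real.exp_le_exp.mpr hlog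
    rw [Real.exp_add, Real.exp_log hpu, Real.exp_log hpu₀] at hexp
    have hu₀le : β u₀ + A ≤ P := by
      rcases hcase with h | h
      · rw [hPdef]
        exact le_trans (by linarith : β u₀ + A ≤ 2*A+1) (le_max_left _ _)
      · rw [h, hPdef]; exact le_max_right _ _
    have hfin : (β u₀ + A) * Real.exp (rmax/ε) ≤ Bup := by
      rw [hBupdef]
      exact mul_le_mul_of_nonneg_right hu₀le (Real.exp_pos _).le
    have : β u + A ≤ Bup := le_trans hexp hfin
    linarith
  -- Conclusion
  refine ⟨A + max Blo Bup, ?_⟩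
  intro u huu
  have h1 := hlow u huu
  have h2 := hupb u huu
  have habs := abs_le.mp (hA u (hsub huu))
  have hm1 : Blo ≤ max Blo Bup := le_max_left _ _
  have hm2 : Bup ≤ max Blo Bup := le_max_right _ _
  constructor
  · rw [abs_le]
    constructor <;> linarith
  · rw [abs_le]
    constructor <;> linarith
end

section
/- Let μ, ν : Π → ℝ satisfy, on the rectangle Π = [0,h]×[0,v*], the integral inequalities |μ(u,v)| ≤ e^{vL̄}(m₀ + K̄∫₀ᵛ|ν(u,v')|dv') and |ν(u,v)| ≤ e^{uK̄}(1 + L̄∫₀ᵘ|μ(u',v)|du') for constants K̄, L̄ ≥ 0, m₀ ≥ 0. Then |ν(u,v)| ≤ F₁(u,v) and |μ(u,v)| ≤ F₂(u,v), where F₁(u,v) = f₁(u,v) + f₂(u,v)∫₀ᵛ f₁(u,v')e^{∫_{v'}^v f₂(u,v'')dv''}dv' with f₁(u,v) = e^{uK̄}(1 + uL̄e^{vL̄}M), f₂(u,v) = uK̄L̄e^{uK̄+vL̄}, F₂(u,v) = e^{vL̄}(m₀ + K̄∫₀ᵛF₁(u,v')dv'), and M is any bound with |μ| ≤ M; moreover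 F₁(u,v) → 1 as u → 0 and F₂(u,v) → m₀ as v → 0. -/
/-- f₁(u,v) = e^{uK̄}(1 + uL̄e^{vL̄}M). -/
noncomputable def fone (K L M u v : ℝ) : ℝ :=
  Real.exp (u * K) * (1 + u * L * Real.exp (v * L) * M)

/-- f₂(u,v) = uK̄L̄e^{uK̄+vL̄}. -/
noncomputable def ftwo (K L u v : ℝ) : ℝ :=
  u * K * L * Real.exp (u * K + v * L)

/-- F₁(u,v) = f₁(u,v) + f₂(u,v)∫₀ᵛ f₁(u,v')e^{∫_{v'}^v f₂(u,v'')dv''}dv'. -/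
noncomputable def Fone (K L M u v : ℝ) : ℝ :=
  fone K L M u v + ftwo K L u v *
    ∫ v' in (0:ℝ)..v, fone K L M u v' * Real.exp (∫ v'' in v'..v, ftwo K L u v'')

/-- F₂(u,v) = e^{vL̄}(m₀ + K̄∫₀ᵛ F₁(u,v')dv'). -/
noncomputable def Ftwo (K L M m₀ u v : ℝ) : ℝ :=
  Real.exp (v * L) * (m₀ + K * ∫ v' in (0:ℝ)..v, Fone K L M u v')

/-! Since f₂ ≥ 0 and f₁ ≥ 0, F₁ ≥ f₁, and f₁ already dominates |ν|: inserting the a priori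
bound |μ| ≤ M into the ν-inequality gives |ν| ≤ e^{uK̄}(1 + uL̄M) ≤ f₁ because e^{vL̄} ≥ 1.
Integrating |ν| ≤ F₁ in v and inserting it into the μ-inequality gives |μ| ≤ F₂. The limits
follow from continuity of F₁ and F₂, as parametric interval integrals of continuous integrands,
together with F₁(0,v) = 1 and F₂(u,0) = m₀. -/

theorem intervalIntegral_mono_on_of_nonneg {f g : ℝ → ℝ} {a b : ℝ} (hab : a ≤ b)
    (hf : ∀ x ∈ Set.Icc a b, 0 ≤ f x) (hg : IntervalIntegrable g MeasureTheory.volume a b)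
    (h : ∀ x ∈ Set.Icc a b, f x ≤ g x) : ∫ x in a..b, f x ≤ ∫ x in a..b, g x := by
  rw [intervalIntegral.integral_of_le hab, intervalIntegral.integral_of_le hab]
  refine MeasureTheory.integral_mono_of_nonneg ?_ hg.1 ?_ <;>
    refine MeasureTheory.ae_restrict_of_forall_mem measurableSet_Ioc fun x hx => ?_
  exacts [hf x (Set.Ioc_subset_Icc_self hx), h x (Set.Ioc_subset_Icc_self hx)]

open intervalIntegral in
@[fun_prop]
theorem continuous_intervalIntegral_of_continuous_uncurry {X : Type*} [TopologicalSpace X]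
    {f : X → ℝ → ℝ} {a b : X → ℝ} (hf : Continuous f.uncurry) (ha : Continuous a)
    (hb : Continuous b) : Continuous fun x => ∫ t in a x..b x, f x t := by
  have hfi : ∀ x c d, IntervalIntegrable (f x) MeasureTheory.volume c d := fun x _ _ =>
    (hf.uncurry_left x).intervalIntegrable _ _
  have hsplit : (fun x => ∫ t in a x..b x, f x t) =
      fun x => (∫ t in (0:ℝ)..b x, f x t) - ∫ t in (0:ℝ)..a x, f x t :=
    funext fun x => (integral_interval_sub_left (hfi x 0 _) (hfi x 0 _)).symm
  rw [hsplit]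
  fun_prop

@[fun_prop]
theorem continuous_uncurry_Fone (K L M : ℝ) : Continuous (Function.uncurry (Fone K L M)) := by
  unfold Fone fone ftwo
  fun_prop

theorem continuous_Ftwo (K L M m₀ u : ℝ) : Continuous (Ftwo K L M m₀ u) := by
  unfold Ftwo
  fun_prop

@[simp]
theorem Fone_zero_left (K L M v : ℝ) : Fone K L M 0 v = 1 := by
  simp [Fone, fone, ftwo]

@[simp]
theorem Ftwo_zero_right (K L M m₀ u : ℝ) : Ftwo K L M m₀ u 0 = m₀ := by
  simp [Ftwo]

section Bounds

variable {K L M u v : ℝ}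

theorem fone_nonneg (hL : 0 ≤ L) (hM : 0 ≤ M) (hu : 0 ≤ u) : 0 ≤ fone K L M u v := by
  unfold fone; positivity

theorem ftwo_nonneg (hK : 0 ≤ K) (hL : 0 ≤ L) (hu : 0 ≤ u) : 0 ≤ ftwo K L u v := by
  unfold ftwo; positivity

theorem fone_le_Fone (hK : 0 ≤ K) (hL : 0 ≤ L) (hM : 0 ≤ M) (hu : 0 ≤ u) (hv : 0 ≤ v) :
    fone K L M u v ≤ Fone K L M u v := by
  have hint : 0 ≤ ∫ v' in (0:ℝ)..v, fone K L M u v' * Real.exp (∫ t in v'..v, ftwo K L u t) :=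
    intervalIntegral.integral_nonneg hv fun _ _ => mul_nonneg (fone_nonneg hL hM hu) (by positivity)
  unfold Fone
  nlinarith [mul_nonneg (ftwo_nonneg (v := v) hK hL hu) hint]

theorem exp_mul_one_add_le_fone (hL : 0 ≤ L) (hM : 0 ≤ M) (hu : 0 ≤ u) (hv : 0 ≤ v) :
    Real.exp (u * K) * (1 + L * (u * M)) ≤ fone K L M u v := by
  have hexp : 1 ≤ Real.exp (v * L) := Real.one_le_exp (mul_nonneg hv hL)
  unfold fone
  refine mul_le_mul_of_nonneg_left ?_ (Real.exp_nonneg _)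
  nlinarith [mul_nonneg (mul_nonneg hu hL) hM]

end Bounds

theorem stmt12_general (h vStar Kb Lb m₀ M : ℝ)
    (hK : 0 ≤ Kb) (hL : 0 ≤ Lb)
    (μ ν : ℝ → ℝ → ℝ)
    (hM : ∀ u ∈ Set.Icc (0:ℝ) h, ∀ v ∈ Set.Icc (0:ℝ) vStar, |μ u v| ≤ M)
    (hμ : ∀ u ∈ Set.Icc (0:ℝ) h, ∀ v ∈ Set.Icc (0:ℝ) vStar,
      |μ u v| ≤ Real.exp (v * Lb) * (m₀ + Kb * ∫ v' in (0:ℝ)..v, |ν u v'|))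
    (hν : ∀ u ∈ Set.Icc (0:ℝ) h, ∀ v ∈ Set.Icc (0:ℝ) vStar,
      |ν u v| ≤ Real.exp (u * Kb) * (1 + Lb * ∫ u' in (0:ℝ)..u, |μ u' v|)) :
    (∀ u ∈ Set.Icc (0:ℝ) h, ∀ v ∈ Set.Icc (0:ℝ) vStar, |ν u v| ≤ Fone Kb Lb M u v) ∧
    (∀ u ∈ Set.Icc (0:ℝ) h, ∀ v ∈ Set.Icc (0:ℝ) vStar, |μ u v| ≤ Ftwo Kb Lb M m₀ u v) ∧
    (∀ v : ℝ, Filter.Tendsto (fun u => Fone Kb Lb M u v) (nhds 0) (nhds 1)) ∧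
    (∀ u : ℝ, Filter.Tendsto (fun v => Ftwo Kb Lb M m₀ u v) (nhds 0) (nhds m₀)) := by
  have hν_le : ∀ u ∈ Set.Icc (0:ℝ) h, ∀ v ∈ Set.Icc (0:ℝ) vStar, |ν u v| ≤ Fone Kb Lb M u v := by
    intro u hu v hv
    have hM0 : 0 ≤ M := (abs_nonneg _).trans (hM u hu v hv)
    have hμ_int : ∫ u' in (0:ℝ)..u, |μ u' v| ≤ u * M := by
      simpa [hu.1] using intervalIntegral_mono_on_of_nonneg hu.1 (fun _ _ => abs_nonneg _)
        intervalIntegrable_const fun u' hu' => hM u' ⟨hu'.1, hu'.2.trans hu.2⟩ v hv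
    calc |ν u v| ≤ Real.exp (u * Kb) * (1 + Lb * ∫ u' in (0:ℝ)..u, |μ u' v|) := hν u hu v hv
      _ ≤ Real.exp (u * Kb) * (1 + Lb * (u * M)) := by gcongr
      _ ≤ fone Kb Lb M u v := exp_mul_one_add_le_fone hL hM0 hu.1 hv.1
      _ ≤ Fone Kb Lb M u v := fone_le_Fone hK hL hM0 hu.1 hv.1
  refine ⟨hν_le, fun u hu v hv => ?_, fun v => ?_, fun u => ?_⟩
  · have hν_int : ∫ v' in (0:ℝ)..v, |ν u v'| ≤ ∫ v' in (0:ℝ)..v, Fone Kb Lb M u v' :=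
      intervalIntegral_mono_on_of_nonneg hv.1 (fun _ _ => abs_nonneg _)
        (((continuous_uncurry_Fone Kb Lb M).uncurry_left u).intervalIntegrable _ _)
        fun v' hv' => hν_le u hu v' ⟨hv'.1, hv'.2.trans hv.2⟩
    calc |μ u v| ≤ Real.exp (v * Lb) * (m₀ + Kb * ∫ v' in (0:ℝ)..v, |ν u v'|) := hμ u hu v hv
      _ ≤ Ftwo Kb Lb M m₀ u v := by unfold Ftwo; gcongr
  · simpa using ((continuous_uncurry_Fone Kb Lb M).uncurry_right v).tendsto 0
  · simpa using (continuous_Ftwo Kb Lb M m₀ u).tendsto 0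

/-- two-dimensional coupled Gronwall estimate on Π = [0,h]×[0,v*]:
if |μ(u,v)| ≤ e^{vL̄}(m₀ + K̄∫₀ᵛ|ν(u,·)|), |ν(u,v)| ≤ e^{uK̄}(1 + L̄∫₀ᵘ|μ(·,v)|),
and |μ| ≤ M, then |ν| ≤ F₁ and |μ| ≤ F₂; moreover F₁(u,v) → 1 as u → 0 and
F₂(u,v) → m₀ as v → 0. -/
theorem stmt12 (h vStar Kb Lb m₀ M : ℝ)
    (hh : 0 ≤ h) (hv : 0 ≤ vStar) (hK : 0 ≤ Kb) (hL : 0 ≤ Lb) (hm : 0 ≤ m₀)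
    (μ ν : ℝ → ℝ → ℝ)
    (hcμ : ContinuousOn (fun p : ℝ × ℝ => μ p.1 p.2) (Set.Icc 0 h ×ˢ Set.Icc 0 vStar))
    (hcν : ContinuousOn (fun p : ℝ × ℝ => ν p.1 p.2) (Set.Icc 0 h ×ˢ Set.Icc 0 vStar))
    (hM : ∀ u ∈ Set.Icc (0:ℝ) h, ∀ v ∈ Set.Icc (0:ℝ) vStar, |μ u v| ≤ M)
    (hμ : ∀ u ∈ Set.Icc (0:ℝ) h, ∀ v ∈ Set.Icc (0:ℝ) vStar,
      |μ u v| ≤ Real.exp (v * Lb) * (m₀ + Kb * ∫ v' in (0:ℝ)..v, |ν u v'|))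
    (hν : ∀ u ∈ Set.Icc (0:ℝ) h, ∀ v ∈ Set.Icc (0:ℝ) vStar,
      |ν u v| ≤ Real.exp (u * Kb) * (1 + Lb * ∫ u' in (0:ℝ)..u, |μ u' v|)) :
    (∀ u ∈ Set.Icc (0:ℝ) h, ∀ v ∈ Set.Icc (0:ℝ) vStar, |ν u v| ≤ Fone Kb Lb M u v) ∧
    (∀ u ∈ Set.Icc (0:ℝ) h, ∀ v ∈ Set.Icc (0:ℝ) vStar, |μ u v| ≤ Ftwo Kb Lb M m₀ u v) ∧
    (∀ v : ℝ, Filter.Tendsto (fun u => Fone Kb Lb M u v) (nhds 0) (nhds 1)) ∧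
    (∀ u : ℝ, Filter.Tendsto (fun v => Ftwo Kb Lb M m₀ u v) (nhds 0) (nhds m₀)) :=
  stmt12_general h vStar Kb Lb m₀ M hK hL μ ν hM hμ hν
end

section
/- Suppose two C¹ functions Δμ, Δν on Π = [0,h]×[0,ε] vanish on the respective initial edges (Δμ(u,0) = 0, Δν(0,v) = 0) and satisfy |Δμ(u,v)| ≤ C∫₀ᵛ(|Δν| + Λ)(u,v')dv' and |Δν(u,v)| ≤ C∫₀ᵘ(|Δμ| + Λ)(u',v)du' for constants C, Λ ≥ 0. Then |Δν(u,v)| ≤ C'uΛ and |Δμ(u,v)| ≤ C'vΛ for a constant C' depending only on C, h, ε. -/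
/-! Substituting the bound for `Δν` into the one for `Δμ` gives an integral inequality for `Δμ`
alone. In the weighted sup norm `sup |Δμ u v| e^{-L u}` with `L = C²ε + 1` the integration in `u`
gains a factor `1 / L`, so the inequality becomes a contraction
`‖Δμ‖ ≤ (C²ε / L) ‖Δμ‖ + C ε (C h + 1) Λ`, and `Δμ = O(Λ)` uniformly on the rectangle.
Feeding this back into the two inequalities gives the bounds linear in `u` and `v`. -/

open intervalIntegral Real Set
open MeasureTheory (volume ae_of_all ae_restrict_iff' integral_mono_of_nonneg)

/-- No integrability of `f` is needed: a non-integrable `f` has integral `0`. -/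
theorem intervalIntegral.integral_mono_on_of_nonneg {f g : ℝ → ℝ} {a b : ℝ} (hab : a ≤ b)
    (hg : IntervalIntegrable g volume a b) (hf : ∀ x ∈ Icc a b, 0 ≤ f x)
    (hfg : ∀ x ∈ Icc a b, f x ≤ g x) : ∫ x in a..b, f x ≤ ∫ x in a..b, g x := by
  have hIoc (P : ℝ → Prop) (hP : ∀ x ∈ Icc a b, P x) : ∀ᵐ x ∂volume.restrict (Ioc a b), P x :=
    (ae_restrict_iff' measurableSet_Ioc).mpr (ae_of_all _ fun x hx => hP x (Ioc_subset_Icc_self hx))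
  rw [integral_of_le hab, integral_of_le hab]
  exact integral_mono_of_nonneg (hIoc _ hf) hg.1 (hIoc _ hfg)

theorem integral_abs_add_const_le {f g : ℝ → ℝ} {a Λ : ℝ} (ha : 0 ≤ a) (hΛ : 0 ≤ Λ)
    (hg : IntervalIntegrable g volume 0 a) (hfg : ∀ x ∈ Icc 0 a, |f x| ≤ g x) :
    ∫ x in 0..a, (|f x| + Λ) ≤ ∫ x in 0..a, (g x + Λ) :=
  integral_mono_on_of_nonneg ha (hg.add intervalIntegrable_const) (fun _ _ => by positivity)
    fun x hx => add_le_add_left (hfg x hx) Λ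

theorem integral_abs_add_const_le_mul {f : ℝ → ℝ} {a c Λ : ℝ} (ha : 0 ≤ a) (hΛ : 0 ≤ Λ)
    (hf : ∀ x ∈ Icc 0 a, |f x| ≤ c) : ∫ x in 0..a, (|f x| + Λ) ≤ a * (c + Λ) := by
  simpa [mul_add] using integral_abs_add_const_le ha hΛ intervalIntegrable_const hf

theorem integral_mul_exp_add_const_le {S L Λ a : ℝ} (hS : 0 ≤ S) (hL : 0 < L) :
    ∫ x in 0..a, (S * exp (L * x) + Λ) ≤ S * exp (L * a) / L + Λ * a := by
  rw [integral_add (Continuous.intervalIntegrable (by fun_prop) _ _) intervalIntegrable_const,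
    integral_const_mul,
    integral_comp_mul_left exp hL.ne', integral_exp, integral_const]
  have : 0 ≤ S / L := by positivity
  simp only [mul_zero, exp_zero, smul_eq_mul, sub_zero]
  field_simp
  nlinarith

theorem one_sub_mul_le_of_bound_imp_bound {X : Type*} {K : Set X} {F : X → ℝ} {q b : ℝ}
    (hq : q < 1) (hF : BddAbove (F '' K))
    (himp : ∀ S, (∀ x ∈ K, F x ≤ S) → ∀ x ∈ K, F x ≤ q * S + b) :
    ∀ x ∈ K, (1 - q) * F x ≤ b := by
  intro x hx
  have hS : ∀ y ∈ K, F y ≤ sSup (F '' K) := fun y hy => le_csSup hF (mem_image_of_mem F hy)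
  have hsup : sSup (F '' K) ≤ q * sSup (F '' K) + b :=
    csSup_le ⟨F x, mem_image_of_mem F hx⟩ (forall_mem_image.2 (himp _ hS))
  nlinarith [hS x hx]

theorem abs_le_contraction_mul_exp {C h ε Λ L S u v : ℝ} {Δμ Δν : ℝ → ℝ → ℝ}
    (hC : 0 ≤ C) (hΛ : 0 ≤ Λ) (hL : 0 < L)
    (hIμ : ∀ u ∈ Icc (0:ℝ) h, ∀ v ∈ Icc (0:ℝ) ε,
      |Δμ u v| ≤ C * ∫ v' in (0:ℝ)..v, (|Δν u v'| + Λ))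
    (hIν : ∀ u ∈ Icc (0:ℝ) h, ∀ v ∈ Icc (0:ℝ) ε,
      |Δν u v| ≤ C * ∫ u' in (0:ℝ)..u, (|Δμ u' v| + Λ))
    (hS : ∀ u ∈ Icc (0:ℝ) h, ∀ v ∈ Icc (0:ℝ) ε, |Δμ u v| ≤ S * exp (L * u))
    (hu : u ∈ Icc 0 h) (hv : v ∈ Icc 0 ε) :
    |Δμ u v| ≤ (C ^ 2 * ε / L * S + C * ε * (C * h + 1) * Λ) * exp (L * u) := by
  have hS0 : 0 ≤ S := nonneg_of_mul_nonneg_left ((abs_nonneg _).trans (hS u hu v hv)) (exp_pos _)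
  have hh : 0 ≤ h := hu.1.trans hu.2
  have hε : 0 ≤ ε := hv.1.trans hv.2
  have hν : ∀ v' ∈ Icc 0 ε, |Δν u v'| ≤ C * (S * exp (L * u) / L + Λ * h) := fun v' hv' =>
    calc |Δν u v'| ≤ C * ∫ u' in 0..u, (|Δμ u' v'| + Λ) := hIν u hu v' hv'
      _ ≤ C * ∫ u' in 0..u, (S * exp (L * u') + Λ) := by
        gcongr
        exact integral_abs_add_const_le hu.1 hΛ (Continuous.intervalIntegrable (by fun_prop) _ _)
          fun x hx => hS x ⟨hx.1, hx.2.trans hu.2⟩ v' hv'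
      _ ≤ C * (S * exp (L * u) / L + Λ * u) := by
        gcongr
        exact integral_mul_exp_add_const_le hS0 hL
      _ ≤ C * (S * exp (L * u) / L + Λ * h) := by gcongr; exact hu.2
  have hexp : 1 ≤ exp (L * u) := one_le_exp (mul_nonneg hL.le hu.1)
  calc |Δμ u v| ≤ C * ∫ v' in 0..v, (|Δν u v'| + Λ) := hIμ u hu v hv
    _ ≤ C * (v * (C * (S * exp (L * u) / L + Λ * h) + Λ)) := by
      gcongr
      exact integral_abs_add_const_le_mul hv.1 hΛ fun x hx => hν x ⟨hx.1, hx.2.trans hv.2⟩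
    _ ≤ C * (ε * (C * (S * exp (L * u) / L + Λ * h) + Λ)) := by gcongr; exact hv.2
    _ = C ^ 2 * ε / L * S * exp (L * u) + C * ε * (C * h + 1) * Λ := by ring
    _ ≤ (C ^ 2 * ε / L * S + C * ε * (C * h + 1) * Λ) * exp (L * u) := by
      rw [add_mul]
      exact add_le_add le_rfl (le_mul_of_one_le_right (by positivity) hexp)

theorem abs_le_of_coupled_integral_le {C h ε Λ : ℝ} {Δμ Δν : ℝ → ℝ → ℝ}
    (hC : 0 ≤ C) (hΛ : 0 ≤ Λ)
    (hcμ : ContinuousOn (fun p : ℝ × ℝ => Δμ p.1 p.2) (Icc 0 h ×ˢ Icc 0 ε))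
    (hIμ : ∀ u ∈ Icc (0:ℝ) h, ∀ v ∈ Icc (0:ℝ) ε,
      |Δμ u v| ≤ C * ∫ v' in (0:ℝ)..v, (|Δν u v'| + Λ))
    (hIν : ∀ u ∈ Icc (0:ℝ) h, ∀ v ∈ Icc (0:ℝ) ε,
      |Δν u v| ≤ C * ∫ u' in (0:ℝ)..u, (|Δμ u' v| + Λ))
    {u v : ℝ} (hu : u ∈ Icc 0 h) (hv : v ∈ Icc 0 ε) :
    |Δμ u v| ≤ (C ^ 2 * ε + 1) * (C * ε * (C * h + 1)) * exp ((C ^ 2 * ε + 1) * h) * Λ := by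
  have hh : 0 ≤ h := hu.1.trans hu.2
  have hε : 0 ≤ ε := hv.1.trans hv.2
  set L := C ^ 2 * ε + 1
  have hL : 0 < L := by positivity
  have hcontr : ∀ p ∈ Icc 0 h ×ˢ Icc 0 ε,
      (1 - C ^ 2 * ε / L) * (|Δμ p.1 p.2| / exp (L * p.1)) ≤ C * ε * (C * h + 1) * Λ := by
    refine one_sub_mul_le_of_bound_imp_bound (div_lt_one hL |>.2 (by linarith))
      ((isCompact_Icc.prod isCompact_Icc).bddAbove_image
        (hcμ.abs.div (by fun_prop) fun _ _ => (exp_pos _).ne')) ?_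
    rintro S hS ⟨u', v'⟩ ⟨hu', hv'⟩
    rw [div_le_iff₀ (exp_pos _)]
    exact abs_le_contraction_mul_exp hC hΛ hL hIμ hIν
      (fun x hx y hy => (div_le_iff₀ (exp_pos _)).1 (hS (x, y) ⟨hx, hy⟩)) hu' hv'
  have hweighted : |Δμ u v| ≤ L * (C * ε * (C * h + 1) * Λ) * exp (L * u) := by
    have h1 : 1 - C ^ 2 * ε / L = L⁻¹ := by field_simp; ring
    have := hcontr (u, v) ⟨hu, hv⟩
    rwa [h1, inv_mul_le_iff₀ hL, div_le_iff₀ (exp_pos _)] at this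
  calc |Δμ u v| ≤ L * (C * ε * (C * h + 1) * Λ) * exp (L * u) := hweighted
    _ ≤ L * (C * ε * (C * h + 1) * Λ) * exp (L * h) := by gcongr; exact hu.2
    _ = L * (C * ε * (C * h + 1)) * exp (L * h) * Λ := by ring

/-- contraction estimate for the differences of successive iterates.
If Δμ, Δν vanish on the initial edges and satisfy
|Δμ(u,v)| ≤ C∫₀ᵛ(|Δν(u,·)| + Λ) and |Δν(u,v)| ≤ C∫₀ᵘ(|Δμ(·,v)| + Λ) on
Π = [0,h]×[0,ε], then |Δν(u,v)| ≤ C'uΛ and |Δμ(u,v)| ≤ C'vΛ for a constant C'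
depending only on C, h, ε. -/
theorem stmt19 (C h ε : ℝ) (hC : 0 ≤ C) (hh : 0 ≤ h) (hε : 0 ≤ ε) :
    ∃ C' : ℝ, ∀ Λ : ℝ, 0 ≤ Λ → ∀ Δμ Δν : ℝ → ℝ → ℝ,
      ContinuousOn (fun p : ℝ × ℝ => Δμ p.1 p.2) (Set.Icc 0 h ×ˢ Set.Icc 0 ε) →
      ContinuousOn (fun p : ℝ × ℝ => Δν p.1 p.2) (Set.Icc 0 h ×ˢ Set.Icc 0 ε) →
      (∀ u ∈ Set.Icc (0:ℝ) h, Δμ u 0 = 0) →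
      (∀ v ∈ Set.Icc (0:ℝ) ε, Δν 0 v = 0) →
      (∀ u ∈ Set.Icc (0:ℝ) h, ∀ v ∈ Set.Icc (0:ℝ) ε,
        |Δμ u v| ≤ C * ∫ v' in (0:ℝ)..v, (|Δν u v'| + Λ)) →
      (∀ u ∈ Set.Icc (0:ℝ) h, ∀ v ∈ Set.Icc (0:ℝ) ε,
        |Δν u v| ≤ C * ∫ u' in (0:ℝ)..u, (|Δμ u' v| + Λ)) →
      ∀ u ∈ Set.Icc (0:ℝ) h, ∀ v ∈ Set.Icc (0:ℝ) ε,
        |Δν u v| ≤ C' * u * Λ ∧ |Δμ u v| ≤ C' * v * Λ := by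
  set D := (C ^ 2 * ε + 1) * (C * ε * (C * h + 1)) * exp ((C ^ 2 * ε + 1) * h)
  have hD : 0 ≤ D := by positivity
  refine ⟨C * (D + 1) * (C * h + 1), fun Λ hΛ Δμ Δν hcμ _ _ _ hIμ hIν u hu v hv => ?_⟩
  have hν : ∀ v ∈ Icc 0 ε, |Δν u v| ≤ C * (D + 1) * u * Λ := fun v hv =>
    calc |Δν u v| ≤ C * ∫ u' in 0..u, (|Δμ u' v| + Λ) := hIν u hu v hv
      _ ≤ C * (u * (D * Λ + Λ)) := by
        gcongr
        exact integral_abs_add_const_le_mul hu.1 hΛ fun x hx =>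
          abs_le_of_coupled_integral_le hC hΛ hcμ hIμ hIν ⟨hx.1, hx.2.trans hu.2⟩ hv
      _ = C * (D + 1) * u * Λ := by ring
  constructor
  · calc |Δν u v| ≤ C * (D + 1) * u * Λ := hν v hv
      _ ≤ C * (D + 1) * (C * h + 1) * u * Λ := by
        gcongr ?_ * _ * _
        · exact hu.1
        · exact le_mul_of_one_le_right (by positivity) (le_add_of_nonneg_left (by positivity))
  · calc |Δμ u v| ≤ C * ∫ v' in 0..v, (|Δν u v'| + Λ) := hIμ u hu v hv
      _ ≤ C * (v * (C * (D + 1) * h * Λ + Λ)) := by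
        gcongr
        exact integral_abs_add_const_le_mul hv.1 hΛ fun x hx =>
          (hν x ⟨hx.1, hx.2.trans hv.2⟩).trans (by have := hu.1; gcongr; exact hu.2)
      _ ≤ C * (D + 1) * (C * h + 1) * v * Λ := by
        have := hv.1
        nlinarith [mul_nonneg (mul_nonneg (mul_nonneg hC hD) this) hΛ]
end
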